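/- Let r ∈ ℝ and let u : ℝ → ℝ be three times continuously differentiable on [0,1] with u(0) = 0, u(1) = 0, and u'(1) = 0. Then −2·∫_0^1 e^{(r/2)s}·u(s)·u'''(s) ds = ∫_0^1 e^{(r/2)s}·((r³/8)·u(s)² − (3r/2)·u'(s)²) ds − u'(0)². -/

import Mathlib

open MeasureTheory Set Real

theorem intervalIntegral.integral_eq_sub_of_hasDerivWithinAt_Icc {E : Type*}
    [NormedAddCommGroup E] [NormedSpace ℝ E] [CompleteSpace E] {f f' : ℝ → E} {a b : ℝ}
    (hab : a ≤ b) (hderiv : ∀ x ∈ Icc a b, HasDerivWithinAt f (f' x) (Icc a b) x)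
    (hint : IntervalIntegrable f' volume a b) :
    ∫ x in a..b, f' x = f b - f a :=
  integral_eq_sub_of_hasDerivAt_of_le hab
    (fun x hx => (hderiv x hx).continuousWithinAt)
    (fun x hx => (hderiv x (Ioo_subset_Icc_self hx)).hasDerivAt (Icc_mem_nhds hx.1 hx.2)) hint

/-- An antiderivative of `exp (c s) * (-2 u u''' - c³ u² + 3 c u'²)`, found by integrating
`exp (c s) * u * u'''` by parts three times. -/
noncomputable def airyEnergyFlux (c : ℝ) (u u' u'' : ℝ → ℝ) (s : ℝ) : ℝ :=
  exp (c * s) * (-2 * u s * u'' s + u' s ^ 2 + 2 * c * u s * u' s - c ^ 2 * u s ^ 2)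

theorem hasDerivWithinAt_airyEnergyFlux {c x : ℝ} {u u' u'' u''' : ℝ → ℝ} {t : Set ℝ}
    (hu' : HasDerivWithinAt u (u' x) t x) (hu'' : HasDerivWithinAt u' (u'' x) t x)
    (hu''' : HasDerivWithinAt u'' (u''' x) t x) :
    HasDerivWithinAt (airyEnergyFlux c u u' u'')
      (exp (c * x) * (-2 * u x * u''' x - c ^ 3 * u x ^ 2 + 3 * c * u' x ^ 2)) t x := by
  have hexp : HasDerivWithinAt (fun s => exp (c * s)) (exp (c * x) * c) t x :=
    ((hasDerivAt_id x).const_mul c).exp.hasDerivWithinAt.congr_deriv (by simp)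
  have hpoly := ((((hu'.const_mul (-2)).fun_mul hu''').fun_add (hu''.fun_pow 2)).fun_add
    ((hu'.const_mul (2 * c)).fun_mul hu'')).fun_sub ((hu'.fun_pow 2).const_mul (c ^ 2))
  exact (hexp.fun_mul hpoly).congr_deriv (by norm_num; ring)

theorem neg_two_mul_integral_exp_mul_mul_third_deriv {a b c : ℝ} {u u' u'' u''' : ℝ → ℝ}
    (hab : a ≤ b)
    (hu' : ∀ x ∈ Icc a b, HasDerivWithinAt u (u' x) (Icc a b) x)
    (hu'' : ∀ x ∈ Icc a b, HasDerivWithinAt u' (u'' x) (Icc a b) x)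
    (hu''' : ∀ x ∈ Icc a b, HasDerivWithinAt u'' (u''' x) (Icc a b) x)
    (hcont : ContinuousOn u''' (Icc a b)) :
    -2 * ∫ s in a..b, exp (c * s) * u s * u''' s
      = (∫ s in a..b, exp (c * s) * (c ^ 3 * u s ^ 2 - 3 * c * u' s ^ 2))
        + (airyEnergyFlux c u u' u'' b - airyEnergyFlux c u u' u'' a) := by
  have hcu : ContinuousOn u (Icc a b) := fun x hx => (hu' x hx).continuousWithinAt
  have hcu' : ContinuousOn u' (Icc a b) := fun x hx => (hu'' x hx).continuousWithinAt
  have hftc := intervalIntegral.integral_eq_sub_of_hasDerivWithinAt_Icc hab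
    (fun x hx => hasDerivWithinAt_airyEnergyFlux (c := c) (hu' x hx) (hu'' x hx) (hu''' x hx))
    (ContinuousOn.intervalIntegrable_of_Icc hab (by fun_prop))
  rw [← hftc, ← intervalIntegral.integral_const_mul, ← intervalIntegral.integral_add
    (ContinuousOn.intervalIntegrable_of_Icc hab (by fun_prop))
    (ContinuousOn.intervalIntegrable_of_Icc hab (by fun_prop))]
  refine intervalIntegral.integral_congr fun s _ => ?_
  ring

theorem KdV_linear_term_integration_by_parts (r : ℝ) (u u' u'' u''' : ℝ → ℝ)
    (hu' : ∀ x ∈ Set.Icc (0:ℝ) 1, HasDerivWithinAt u (u' x) (Set.Icc 0 1) x)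
    (hu'' : ∀ x ∈ Set.Icc (0:ℝ) 1, HasDerivWithinAt u' (u'' x) (Set.Icc 0 1) x)
    (hu''' : ∀ x ∈ Set.Icc (0:ℝ) 1, HasDerivWithinAt u'' (u''' x) (Set.Icc 0 1) x)
    (hcont : ContinuousOn u''' (Set.Icc 0 1))
    (h0 : u 0 = 0) (h1 : u 1 = 0) (h1' : u' 1 = 0) :
    (-2 * ∫ s in (0:ℝ)..1, Real.exp ((r/2) * s) * u s * u''' s)
    = (∫ s in (0:ℝ)..1,
        Real.exp ((r/2) * s) * ((r ^ 3 / 8) * u s ^ 2 - (3 * r / 2) * u' s ^ 2))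
      - u' 0 ^ 2 := by
  have hflux₀ : airyEnergyFlux (r / 2) u u' u'' 0 = u' 0 ^ 2 := by simp [airyEnergyFlux, h0]
  have hflux₁ : airyEnergyFlux (r / 2) u u' u'' 1 = 0 := by simp [airyEnergyFlux, h1, h1']
  have hweights : ∀ s, (r / 2) ^ 3 * u s ^ 2 - 3 * (r / 2) * u' s ^ 2
      = r ^ 3 / 8 * u s ^ 2 - 3 * r / 2 * u' s ^ 2 := fun s => by ring
  rw [neg_two_mul_integral_exp_mul_mul_third_deriv zero_le_one hu' hu'' hu''' hcont,
    hflux₀, hflux₁]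
  simp only [hweights]
  ring
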